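/- (Aleksandrov's theorem) Let f : ℝ^n → ℝ be a convex function. Then f is twice differentiable almost everywhere: for Lebesgue-a.e. x ∈ ℝ^n there exist a vector v ∈ ℝ^n and a symmetric n×n matrix A such that f(y) = f(x) + ⟨v, y − x⟩ + (1/2)⟨A(y − x), y − x⟩ + o(‖y − x‖²) as y → x. -/

import Mathlib

/-!
The resolvent `P = (I + ∂f)⁻¹` of the subdifferential of `f` (its proximal map) is defined
everywhere by Minty's argument, minimizing `f + ‖· - z‖² / 2`, and it is `1`-Lipschitz and onto.
By Rademacher's theorem and Sard's lemma, and because Lipschitz maps send null sets to null sets,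
almost every `x` is `P z` for a `z` at which `P` has an invertible derivative `B`. There `∂f x` is
the single point `v = z - x`; as `∂f` is upper semicontinuous, `y + q → z` when `y → x` with
`q ∈ ∂f y`, and inverting `P (y + q) = y` to first order gives
`q = v + (B⁻¹ - 1) (y - x) + o(‖y - x‖)`. Integrating this along segments, with supporting lines
in place of the fundamental theorem of calculus, gives the second-order expansion, whose Hessian
is the symmetric part of `B⁻¹ - 1`.
-/

open MeasureTheory Metric Set Asymptotics
open scoped RealInnerProductSpace ENNReal Topology

noncomputable section

abbrev Euc (n : ℕ) := EuclideanSpace ℝ (Fin n)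

open Filter in
theorem abs_sub_le_of_abs_sub_le_mul_add_sq {k : ℝ → ℝ} {ε C : ℝ}
    (h : ∀ s ∈ Icc (0 : ℝ) 1, ∀ t ∈ Icc (0 : ℝ) 1, t ≤ s →
      |k s - k t| ≤ ε * (s - t) + C * (s - t) ^ 2) :
    |k 1 - k 0| ≤ ε := by
  have hN : ∀ N : ℕ, |k 1 - k 0| ≤ ε + C * (1 / ((N : ℝ) + 1)) := fun N => by
    have hN : (0 : ℝ) < N + 1 := by positivity
    set u : ℕ → ℝ := fun i => i / ((N : ℝ) + 1)
    have hu : ∀ i ∈ Finset.range (N + 1), u i ∈ Icc (0 : ℝ) 1 ∧ u (i + 1) ∈ Icc (0 : ℝ) 1 := by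
      intro i hi
      have hi : (i : ℝ) + 1 ≤ N + 1 := by exact_mod_cast Finset.mem_range.1 hi
      refine ⟨⟨by positivity, ?_⟩, ⟨by positivity, ?_⟩⟩ <;>
        rw [div_le_one hN] <;> push_cast <;> linarith
    have hstep : ∀ i : ℕ, u (i + 1) - u i = 1 / ((N : ℝ) + 1) := fun i => by
      simp only [u]; push_cast; ring
    calc |k 1 - k 0| = |∑ i ∈ Finset.range (N + 1), (k (u (i + 1)) - k (u i))| := by
          rw [Finset.sum_range_sub (fun i => k (u i))]
          simp [u, hN.ne']
      _ ≤ ∑ i ∈ Finset.range (N + 1), |k (u (i + 1)) - k (u i)| := Finset.abs_sum_le_sum_abs _ _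
      _ ≤ ∑ i ∈ Finset.range (N + 1), (ε * (1 / ((N : ℝ) + 1)) + C * (1 / ((N : ℝ) + 1)) ^ 2) :=
          Finset.sum_le_sum fun i hi => by
            rw [← hstep i]
            exact h _ (hu i hi).2 _ (hu i hi).1 (by linarith [hstep i, one_div_pos.2 hN])
      _ = ε + C * (1 / ((N : ℝ) + 1)) := by
          rw [Finset.sum_const, Finset.card_range, nsmul_eq_mul]
          push_cast
          field_simp
  have hlim : Tendsto (fun N : ℕ => ε + C * (1 / ((N : ℝ) + 1))) atTop (𝓝 ε) := by
    simpa using tendsto_const_nhds.add (tendsto_one_div_add_atTop_nhds_zero_nat.const_mul C)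
  exact ge_of_tendsto' hlim hN

theorem abs_sub_sub_le_of_supporting_slopes {g m : ℝ → ℝ} {a Q ε : ℝ}
    (hsupp : ∀ s ∈ Icc (0 : ℝ) 1, ∀ t ∈ Icc (0 : ℝ) 1, g t + (s - t) * m t ≤ g s)
    (hm : ∀ t ∈ Icc (0 : ℝ) 1, |m t - (a + Q * t)| ≤ ε) :
    |g 1 - g 0 - a - Q / 2| ≤ ε := by
  have hk := abs_sub_le_of_abs_sub_le_mul_add_sq (k := fun t => g t - a * t - Q * t ^ 2 / 2)
    (ε := ε) (C := |Q| / 2) fun s hs t ht hts => by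
      have hst := sub_nonneg.2 hts
      have hQ := mul_nonneg (sub_nonneg.2 (le_abs_self Q)) (sq_nonneg (s - t))
      have hQ' := mul_nonneg (sub_nonneg.2 (neg_abs_le Q)) (sq_nonneg (s - t))
      have ht' := mul_le_mul_of_nonneg_left (abs_le.1 (hm t ht)).1 hst
      have hs' := mul_le_mul_of_nonneg_left (abs_le.1 (hm s hs)).2 hst
      rw [abs_le]
      constructor <;> nlinarith [hsupp s hs t ht, hsupp t ht s hs]
  convert hk using 2
  ring

section Subdifferential

open Filter

variable {E : Type*} [NormedAddCommGroup E] [InnerProductSpace ℝ E] {f : E → ℝ}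

def subdifferential (f : E → ℝ) (x : E) : Set E := {q | ∀ y, f x + ⟪q, y - x⟫ ≤ f y}

theorem convex_subdifferential (x : E) : Convex ℝ (subdifferential f x) := by
  intro p hp q hq a b ha hb hab y
  have h := add_le_add (mul_le_mul_of_nonneg_left (hp y) ha) (mul_le_mul_of_nonneg_left (hq y) hb)
  rw [inner_add_left, real_inner_smul_left, real_inner_smul_left]
  linear_combination h + (f y - f x) * hab

theorem inner_sub_nonneg_of_mem_subdifferential {x y p q : E} (hp : p ∈ subdifferential f x)
    (hq : q ∈ subdifferential f y) : 0 ≤ ⟪p - q, x - y⟫ := by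
  have := add_le_add (hp y) (hq x)
  rw [← neg_sub x y, inner_neg_right] at this
  rw [inner_sub_left]
  linarith

theorem eq_of_sub_mem_subdifferential {z x y : E} (hx : z - x ∈ subdifferential f x)
    (hy : z - y ∈ subdifferential f y) : x = y := by
  have h := inner_sub_nonneg_of_mem_subdifferential hx hy
  rw [sub_sub_sub_cancel_left, ← neg_sub x y, inner_neg_left, neg_nonneg] at h
  exact sub_eq_zero.1 (real_inner_self_nonpos.1 h)

theorem ConvexOn.subdifferential_nonempty [CompleteSpace E] (hf : ConvexOn ℝ univ f)
    (hfc : Continuous f) (x : E) : (subdifferential f x).Nonempty := by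
  have hopen : IsOpen {p : E × ℝ | p.1 ∈ univ ∧ f p.1 < p.2} := by
    simpa using isOpen_lt (hfc.comp continuous_fst) continuous_snd
  obtain ⟨l, hl⟩ := geometric_hahn_banach_open_point hf.convex_strict_epigraph hopen
    (x := (x, f x)) (by simp)
  set φ : StrongDual ℝ E := l.comp (ContinuousLinearMap.inl ℝ E ℝ)
  set c := l (0, 1)
  have hsplit : ∀ y t, l (y, t) = φ y + t * c := fun y t => by
    rw [show (y, t) = (y, (0 : ℝ)) + t • ((0 : E), (1 : ℝ)) by simp, map_add, map_smul,
      smul_eq_mul, mul_comm]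
    rfl
  have hlt : ∀ y t, f y < t → φ y + t * c < φ x + f x * c := fun y t ht => by
    simpa [hsplit] using hl (y, t) ⟨mem_univ y, ht⟩
  -- the separating hyperplane is not vertical
  have hc : c < 0 := by nlinarith [hlt x (f x + 1) (lt_add_one _)]
  have hle : ∀ y, φ y + f y * c ≤ φ x + f x * c := fun y => by
    have hlim : Tendsto (fun t => φ y + t * c) (𝓝[>] (f y)) (𝓝 (φ y + f y * c)) :=
      tendsto_nhdsWithin_of_tendsto_nhds ((by fun_prop : Continuous fun t => φ y + t * c).tendsto _)
    exact le_of_tendsto hlim (eventually_nhdsWithin_of_forall fun t ht => (hlt y t ht).le)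
  refine ⟨(-c)⁻¹ • (InnerProductSpace.toDual ℝ E).symm φ, fun y => ?_⟩
  rw [real_inner_smul_left, InnerProductSpace.toDual_symm_apply, map_sub]
  have := (inv_mul_le_iff₀ (neg_pos.2 hc)).2 (by linarith [hle y] : φ y - φ x ≤ -c * (f y - f x))
  linarith

theorem ConvexOn.sub_mem_subdifferential_of_forall_le (hf : ConvexOn ℝ univ f) {x z : E}
    (hmin : ∀ u, f x + ‖x - z‖ ^ 2 / 2 ≤ f u + ‖u - z‖ ^ 2 / 2) :
    z - x ∈ subdifferential f x := by
  intro y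
  suffices ⟪z - x, y - x⟫ ≤ f y - f x by linarith
  have hlim : Tendsto (fun t => ⟪z - x, y - x⟫ - t * (‖y - x‖ ^ 2 / 2)) (𝓝[>] 0)
      (𝓝 ⟪z - x, y - x⟫) :=
    tendsto_nhdsWithin_of_tendsto_nhds (by simpa using ((by fun_prop : Continuous fun t : ℝ =>
      ⟪z - x, y - x⟫ - t * (‖y - x‖ ^ 2 / 2)).tendsto 0))
  refine le_of_tendsto hlim (eventually_of_mem (Ioc_mem_nhdsGT one_pos) fun t ⟨ht0, ht1⟩ => ?_)
  have hconv := hf.2 (mem_univ x) (mem_univ y) (sub_nonneg.2 ht1) ht0.le (sub_add_cancel 1 t)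
  rw [show (1 - t) • x + t • y = x + t • (y - x) by module, smul_eq_mul, smul_eq_mul] at hconv
  have hsq : ‖x + t • (y - x) - z‖ ^ 2
      = ‖x - z‖ ^ 2 - 2 * t * ⟪z - x, y - x⟫ + t ^ 2 * ‖y - x‖ ^ 2 := by
    rw [show x + t • (y - x) - z = (x - z) + t • (y - x) by abel, norm_add_sq_real, norm_smul,
      real_inner_smul_right, ← neg_sub z x, inner_neg_left, Real.norm_eq_abs, mul_pow, sq_abs]
    ring
  have := hmin (x + t • (y - x))
  rw [hsq] at this
  nlinarith

theorem ConvexOn.exists_sub_mem_subdifferential [ProperSpace E] (hf : ConvexOn ℝ univ f)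
    (hfc : Continuous f) (z : E) : ∃ x, z - x ∈ subdifferential f x := by
  obtain ⟨q, hq⟩ := hf.subdifferential_nonempty hfc z
  have hcoercive : ∀ᶠ u in cocompact E, f z + ‖z - z‖ ^ 2 / 2 ≤ f u + ‖u - z‖ ^ 2 / 2 := by
    filter_upwards [(tendsto_dist_right_cocompact_atTop z).eventually_ge_atTop (2 * ‖q‖)]
      with u hu
    rw [dist_eq_norm] at hu
    rw [sub_self, norm_zero]
    nlinarith [hq u, neg_le_of_abs_le (abs_real_inner_le_norm q (u - z)), norm_nonneg (u - z)]
  obtain ⟨x, hx⟩ := (hfc.add (by fun_prop : Continuous fun u => ‖u - z‖ ^ 2 / 2)).exists_forall_le'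
    z hcoercive
  exact ⟨x, hf.sub_mem_subdifferential_of_forall_le hx⟩

theorem ConvexOn.exists_prox [ProperSpace E] (hf : ConvexOn ℝ univ f) (hfc : Continuous f) :
    ∃ P : E → E, LipschitzWith 1 P ∧ ∀ z y, P z = y ↔ z - y ∈ subdifferential f y := by
  choose P hP using hf.exists_sub_mem_subdifferential hfc
  refine ⟨P, LipschitzWith.of_dist_le_mul fun z w => ?_, fun z y =>
    ⟨fun h => h ▸ hP z, eq_of_sub_mem_subdifferential (hP z)⟩⟩
  -- monotonicity of `∂f` makes `P` firmly nonexpansive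
  have hfirm : ‖P z - P w‖ ^ 2 ≤ ⟪z - w, P z - P w⟫ := by
    have := inner_sub_nonneg_of_mem_subdifferential (hP z) (hP w)
    rw [show z - P z - (w - P w) = (z - w) - (P z - P w) by abel, inner_sub_left,
      real_inner_self_eq_norm_sq] at this
    linarith
  have := hfirm.trans (real_inner_le_norm _ _)
  rw [NNReal.coe_one, one_mul, dist_eq_norm, dist_eq_norm]
  nlinarith [norm_nonneg (P z - P w), norm_nonneg (z - w)]

theorem isClosed_graph_subdifferential (hfc : Continuous f) :
    IsClosed {p : E × E | p.2 ∈ subdifferential f p.1} := by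
  have : {p : E × E | p.2 ∈ subdifferential f p.1} = ⋂ y, {p | f p.1 + ⟪p.2, y - p.1⟫ ≤ f y} := by
    ext; simp [subdifferential]
  rw [this]
  exact isClosed_iInter fun y => isClosed_le (by fun_prop) continuous_const

theorem exists_bound_subdifferential [ProperSpace E] (hfc : Continuous f) (x : E) :
    ∃ L, ∀ y ∈ closedBall x 1, ∀ q ∈ subdifferential f y, ‖q‖ ≤ L := by
  obtain ⟨M, hM⟩ := (isCompact_closedBall x 2).exists_bound_of_continuousOn hfc.continuousOn
  simp only [Real.norm_eq_abs] at hM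
  refine ⟨2 * M, fun y hy q hq => ?_⟩
  have hu : y + ‖q‖⁻¹ • q ∈ closedBall x 2 := by
    have : ‖‖q‖⁻¹ • q‖ ≤ 1 := by by_cases q = 0 <;> simp [norm_smul, *]
    rw [mem_closedBall] at hy ⊢
    linarith [dist_triangle (y + ‖q‖⁻¹ • q) y x, dist_self_add_left (‖q‖⁻¹ • q) y]
  have h := hq (y + ‖q‖⁻¹ • q)
  rw [add_sub_cancel_left, real_inner_smul_right, real_inner_self_eq_norm_sq, sq, ← mul_assoc,
    inv_mul_mul_self] at h
  linarith [le_abs_self (f (y + ‖q‖⁻¹ • q)), neg_abs_le (f y), hM _ hu,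
    hM y (closedBall_subset_closedBall (by norm_num) hy)]

def subdifferentialNhds (f : E → ℝ) (x : E) : Filter (E × E) :=
  comap Prod.fst (𝓝 x) ⊓ principal {p | p.2 ∈ subdifferential f p.1}

theorem eventually_subdifferentialNhds {x : E} {P : E × E → Prop} :
    (∀ᶠ p in subdifferentialNhds f x, P p) ↔ ∀ᶠ y in 𝓝 x, ∀ q ∈ subdifferential f y, P (y, q) := by
  rw [subdifferentialNhds, eventually_inf_principal, eventually_comap]
  exact ⟨fun h => h.mono fun y hy q hq => hy (y, q) rfl hq,
    fun h => h.mono fun y hy p hp => by subst hp; exact hy p.2⟩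

theorem tendsto_fst_subdifferentialNhds (x : E) :
    Tendsto Prod.fst (subdifferentialNhds f x) (𝓝 x) :=
  tendsto_comap.mono_left inf_le_left

theorem tendsto_snd_subdifferentialNhds [ProperSpace E] (hfc : Continuous f) {x v : E}
    (hx : subdifferential f x = {v}) : Tendsto Prod.snd (subdifferentialNhds f x) (𝓝 v) := by
  obtain ⟨L, hL⟩ := exists_bound_subdifferential hfc x
  have hbdd : ∀ᶠ p in subdifferentialNhds f x, p.2 ∈ closedBall 0 L :=
    eventually_subdifferentialNhds.2 <| eventually_of_mem (closedBall_mem_nhds x one_pos)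
      fun y hy q hq => mem_closedBall_zero_iff.2 (hL y hy q hq)
  refine (isCompact_closedBall 0 L).tendsto_nhds_of_unique_mapClusterPt hbdd fun q _ hq => ?_
  have hxq : ClusterPt (x, q) (subdifferentialNhds f x) := by
    have hle : subdifferentialNhds f x ≤ comap Prod.fst (𝓝 x) := inf_le_left
    rw [ClusterPt, nhds_prod_eq, prod_eq_inf, inf_comm (comap Prod.fst _), inf_assoc,
      inf_of_le_right hle]
    exact neBot_inf_comap_iff_map'.2 hq
  have := (isClosed_graph_subdifferential hfc).closure_subset
    (mem_closure_iff_clusterPt.2 (hxq.mono inf_le_right))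
  simpa [hx] using this

theorem subdifferential_eq_singleton_of_hasFDerivAt {P : E → E}
    (hP : ∀ z y, P z = y ↔ z - y ∈ subdifferential f y) {z : E} {B : E →L[ℝ] E}
    (hB : HasFDerivAt P B z) (hBinj : Function.Injective B) :
    subdifferential f (P z) = {z - P z} := by
  refine Set.eq_singleton_iff_unique_mem.2 ⟨(hP z _).1 rfl, fun v hv => ?_⟩
  set w := v - (z - P z)
  have hconst : ∀ t ∈ Icc (0 : ℝ) 1, P (z + t • w) = P z := fun t ht => (hP _ _).2 <| by
    rw [show z + t • w - P z = (1 - t) • (z - P z) + t • v by module]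
    exact convex_subdifferential _ ((hP z _).1 rfl) hv (sub_nonneg.2 ht.2) ht.1 (by ring)
  have hlim := hB.lim w (c := id) tendsto_norm_atTop_atTop
  have hzero : ∀ᶠ t : ℝ in atTop, id t • (P (z + (id t)⁻¹ • w) - P z) = 0 :=
    (eventually_ge_atTop 1).mono fun t ht => by
      rw [id, hconst _ ⟨inv_nonneg.2 (zero_le_one.trans ht), inv_le_one_of_one_le₀ ht⟩, sub_self,
        smul_zero]
  have hBw : B w = B 0 := by
    rw [map_zero]
    exact tendsto_nhds_unique hlim (tendsto_const_nhds.congr' (hzero.mono fun t ht => ht.symm))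
  exact sub_eq_zero.1 (hBinj hBw)

theorem isLittleO_subdifferentialNhds_of_hasFDerivAt [ProperSpace E] (hfc : Continuous f)
    {P : E → E} (hP : ∀ z y, P z = y ↔ z - y ∈ subdifferential f y) {z : E} {B : E ≃L[ℝ] E}
    (hB : HasFDerivAt P (B : E →L[ℝ] E) z) :
    (fun p : E × E => p.2 - (z - P z) - ((B.symm : E →L[ℝ] E) - 1) (p.1 - P z))
      =o[subdifferentialNhds f (P z)] fun p => p.1 - P z := by
  have hw : Tendsto (fun p : E × E => p.1 + p.2) (subdifferentialNhds f (P z)) (𝓝 z) := by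
    simpa using (tendsto_fst_subdifferentialNhds (P z)).add (tendsto_snd_subdifferentialNhds hfc
      (subdifferential_eq_singleton_of_hasFDerivAt hP hB B.injective))
  have hPw : ∀ᶠ p in subdifferentialNhds f (P z), P (p.1 + p.2) = p.1 :=
    eventually_subdifferentialNhds.2 (Eventually.of_forall fun y q hq => (hP _ _).2 (by simpa))
  have h1 : (fun p : E × E => p.1 - P z - B (p.1 + p.2 - z)) =o[subdifferentialNhds f (P z)]
      fun p => p.1 + p.2 - z :=
    (hB.isLittleO.comp_tendsto hw).congr' (hPw.mono fun p hp => by simp [hp]) .rfl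
  have h2 : (fun p : E × E => B.symm (p.1 - P z) - (p.1 + p.2 - z)) =o[subdifferentialNhds f (P z)]
      fun p => p.1 + p.2 - z :=
    ((B.symm : E →L[ℝ] E).isBigO_comp _ _).trans_isLittleO h1 |>.congr_left fun p => by simp
  have h3 : (fun p : E × E => p.1 + p.2 - z) =O[subdifferentialNhds f (P z)] fun p => p.1 - P z :=
    h2.right_isBigO_add.trans (((B.symm : E →L[ℝ] E).isBigO_comp (fun p : E × E => p.1 - P z) _)
      |>.congr_left fun p => (sub_add_cancel _ _).symm)
  refine (h2.trans_isBigO h3).neg_left.congr_left fun p => ?_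
  simp only [map_sub, neg_sub, sub_apply, ContinuousLinearEquiv.coe_coe, one_apply_eq_self]
  abel

theorem ConvexOn.isLittleO_taylor_of_subdifferential [CompleteSpace E] (hf : ConvexOn ℝ univ f)
    (hfc : Continuous f) {x v : E} {M : E →L[ℝ] E}
    (hM : (fun p : E × E => p.2 - v - M (p.1 - x)) =o[subdifferentialNhds f x] fun p => p.1 - x) :
    (fun y => f y - f x - ⟪v, y - x⟫ - 1 / 2 * ⟪M (y - x), y - x⟫) =o[𝓝 x]
      fun y => ‖y - x‖ ^ 2 := by
  refine isLittleO_iff.2 fun ε hε => ?_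
  obtain ⟨δ, hδ, hball⟩ :=
    Metric.eventually_nhds_iff_ball.1 (eventually_subdifferentialNhds.1 (isLittleO_iff.1 hM hε))
  filter_upwards [ball_mem_nhds x hδ] with y hy
  set d := y - x
  choose q hq using fun t : ℝ => hf.subdifferential_nonempty hfc (x + t • d)
  have hsupp : ∀ s ∈ Icc (0 : ℝ) 1, ∀ t ∈ Icc (0 : ℝ) 1,
      f (x + t • d) + (s - t) * ⟪q t, d⟫ ≤ f (x + s • d) := fun s _ t _ => by
    simpa [← sub_smul, real_inner_smul_right, mul_comm] using hq t (x + s • d)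
  have hslope : ∀ t ∈ Icc (0 : ℝ) 1, |⟪q t, d⟫ - (⟪v, d⟫ + ⟪M d, d⟫ * t)| ≤ ε * ‖d‖ ^ 2 :=
    fun t ht => by
      have hnear := hball _ ((convex_ball x δ).add_smul_sub_mem (mem_ball_self hδ) hy ht) _ (hq t)
      simp only [add_sub_cancel_left, map_smul, norm_smul, Real.norm_eq_abs,
        abs_of_nonneg ht.1] at hnear
      calc |⟪q t, d⟫ - (⟪v, d⟫ + ⟪M d, d⟫ * t)| = |⟪q t - v - t • M d, d⟫| := by
            rw [inner_sub_left, inner_sub_left, real_inner_smul_left]; ring_nf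
        _ ≤ ‖q t - v - t • M d‖ * ‖d‖ := abs_real_inner_le_norm _ _
        _ ≤ ε * (t * ‖d‖) * ‖d‖ := by gcongr
        _ = t * (ε * ‖d‖ ^ 2) := by ring
        _ ≤ ε * ‖d‖ ^ 2 := mul_le_of_le_one_left (by positivity) ht.2
  have := abs_sub_sub_le_of_supporting_slopes hsupp hslope
  rw [zero_smul, add_zero, one_smul, show x + d = y from add_sub_cancel x y] at this
  rw [Real.norm_eq_abs, norm_pow, norm_norm]
  convert this using 2
  ring

theorem ContinuousLinearMap.exists_symmetric_inner_map_self_eq [CompleteSpace E]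
    (M : E →L[ℝ] E) :
    ∃ A : E →L[ℝ] E, (∀ w z, ⟪A w, z⟫ = ⟪w, A z⟫) ∧ ∀ u, ⟪A u, u⟫ = ⟪M u, u⟫ := by
  refine ⟨(1 / 2 : ℝ) • (M + adjoint M), fun w z => ?_, fun u => ?_⟩
  · simp only [smul_apply, add_apply, real_inner_smul_left, real_inner_smul_right, inner_add_left,
      inner_add_right, adjoint_inner_left, adjoint_inner_right]
    ring
  · simp only [smul_apply, add_apply, real_inner_smul_left, inner_add_left, adjoint_inner_left,
      real_inner_comm u (M u)]
    ring

end Subdifferential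

section Lipschitz

variable {E : Type*} [NormedAddCommGroup E] [NormedSpace ℝ E] [FiniteDimensional ℝ E]
  [MeasurableSpace E] [BorelSpace E] (μ : Measure E) [μ.IsAddHaarMeasure] {K : NNReal} {g : E → E}

theorem LipschitzWith.addHaar_image_eq_zero (hg : LipschitzWith K g) {s : Set E} (hs : μ s = 0) :
    μ (g '' s) = 0 := by
  have hH : μH[Module.finrank ℝ E] s = 0 := Measure.absolutelyContinuous_isAddHaarMeasure _ μ hs
  refine Measure.absolutelyContinuous_isAddHaarMeasure μ μH[Module.finrank ℝ E] ?_
  exact le_antisymm ((hg.hausdorffMeasure_image_le (Nat.cast_nonneg _) s).trans (by simp [hH]))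
    zero_le

theorem LipschitzWith.ae_exists_hasFDerivAt_equiv (hg : LipschitzWith K g)
    (hsurj : Function.Surjective g) :
    ∀ᵐ x ∂μ, ∃ z, ∃ B : E ≃L[ℝ] E, g z = x ∧ HasFDerivAt g (B : E →L[ℝ] E) z := by
  set S := {z | DifferentiableAt ℝ g z ∧ (fderiv ℝ g z).det = 0}
  have hD : μ {z | ¬ DifferentiableAt ℝ g z} = 0 := ae_iff.1 (hg.ae_differentiableAt (μ := μ))
  have hS : μ (g '' S) = 0 := addHaar_image_eq_zero_of_det_fderivWithin_eq_zero μ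
    (fun z hz => hz.1.hasFDerivAt.hasFDerivWithinAt) fun z hz => hz.2
  refine ae_iff.2 (measure_mono_null ?_ (measure_union_null (hg.addHaar_image_eq_zero μ hD) hS))
  intro x hx
  obtain ⟨z, rfl⟩ := hsurj x
  by_cases hd : DifferentiableAt ℝ g z
  · refine Or.inr ⟨z, ⟨hd, ?_⟩, rfl⟩
    by_contra hdet
    refine hx ⟨z, (fderiv ℝ g z).toContinuousLinearEquivOfDetNeZero hdet, rfl, ?_⟩
    rw [ContinuousLinearMap.coe_toContinuousLinearEquivOfDetNeZero]
    exact hd.hasFDerivAt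
  · exact Or.inl ⟨z, hd, rfl⟩

end Lipschitz

/-- **Aleksandrov's theorem** (Theorem 2.13): a convex function on `ℝ^n` is twice
differentiable at Lebesgue-almost every point, in the sense of a second-order
Taylor expansion with a symmetric Hessian. -/
theorem aleksandrov_twice_differentiable_ae
    (n : ℕ) (f : Euc n → ℝ) (hf : ConvexOn ℝ Set.univ f) :
    ∀ᵐ x : Euc n, ∃ (v : Euc n) (A : Euc n →L[ℝ] Euc n),
      (∀ w z : Euc n, ⟪A w, z⟫ = ⟪w, A z⟫) ∧
      (fun y => f y - f x - ⟪v, y - x⟫ - (1 / 2) * ⟪A (y - x), y - x⟫)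
        =o[𝓝 x] fun y => ‖y - x‖ ^ 2 := by
  have hfc := hf.locallyLipschitz.continuous
  obtain ⟨P, hPlip, hP⟩ := hf.exists_prox hfc
  have hPsurj : Function.Surjective P := fun x =>
    let ⟨v, hv⟩ := hf.subdifferential_nonempty hfc x
    ⟨x + v, (hP _ _).2 (by simpa using hv)⟩
  filter_upwards [hPlip.ae_exists_hasFDerivAt_equiv volume hPsurj] with x hx
  obtain ⟨z, B, rfl, hB⟩ := hx
  obtain ⟨A, hAsymm, hAM⟩ :=
    ((B.symm : Euc n →L[ℝ] Euc n) - 1).exists_symmetric_inner_map_self_eq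
  refine ⟨z - P z, A, hAsymm, ?_⟩
  simpa only [hAM] using hf.isLittleO_taylor_of_subdifferential hfc
    (isLittleO_subdifferentialNhds_of_hasFDerivAt hfc hP hB)

end
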